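/- Under the setting of P rounds of single-step federated gradient descent with averaging, if at each round the optimal learning rate λ*_{p+1} = K‖J_p‖²/(α∑ₖ‖∇Lₖ(w_p)‖²) is used, then L(w_P) ≤ L(w₀) − ∑_{p=0}^{P−1} 2⁻¹·‖J_p‖⁴/(α(‖J_p‖² + σ_p²)), i.e., L(w_P) ≤ L(w₀) − ∑_{p=0}^{P−1} ‖J_p‖²/(2α(1 + σ_p²/‖J_p‖²)) whenever each J_p ≠ 0. -/

import Mathlib

open InnerProductSpace intervalIntegral

lemma descent_lemma {E : Type*} [NormedAddCommGroup E] [InnerProductSpace ℝ E]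
    [CompleteSpace E] {f : E → ℝ} {α : ℝ} (hα : 0 < α)
    (hdiff : Differentiable ℝ f)
    (hlip : ∀ x y, ‖gradient f x - gradient f y‖ ≤ α * ‖x - y‖)
    (x v : E) :
    f (x + v) ≤ f x + (inner ℝ (gradient f x) v : ℝ) + α / 2 * ‖v‖ ^ 2 := by
  have hgc : Continuous (gradient f) := by
    refine (LipschitzWith.of_dist_le_mul (K := α.toNNReal) ?_).continuous
    intro a b
    simpa [dist_eq_norm, Real.coe_toNNReal α hα.le] using hlip a b
  have hc : ∀ t : ℝ, HasDerivAt (fun s : ℝ => x + s • v) v t := by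
    intro t
    simpa using ((hasDerivAt_id t).smul_const v).const_add x
  set h : ℝ → ℝ := fun t => (inner ℝ (gradient f (x + t • v)) v : ℝ) with hh
  have hg : ∀ t : ℝ, HasDerivAt (fun s : ℝ => f (x + s • v)) (h t) t := by
    intro t
    have hf := (hdiff (x + t • v)).hasGradientAt
    have := hf.hasFDerivAt.comp_hasDerivAt t (hc t)
    simpa [hh, Function.comp_def] using this
  have hcont : Continuous h := by
    exact (continuous_inner.comp (((hgc.comp (by continuity)).prodMk continuous_const)))
  have hint : f (x + v) - f (x + (0:ℝ) • v) = ∫ t in (0:ℝ)..1, h t := by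
    rw [integral_eq_sub_of_hasDerivAt (fun t _ => hg t) (hcont.intervalIntegrable 0 1)]
    norm_num
  have hbound : ∫ t in (0:ℝ)..1, h t ≤ ∫ t in (0:ℝ)..1, (h 0 + α * t * ‖v‖^2) := by
    apply integral_mono_on (by norm_num) (hcont.intervalIntegrable 0 1)
      ((by continuity : Continuous fun t : ℝ => h 0 + α * t * ‖v‖^2).intervalIntegrable 0 1)
    intro t ht
    have h1 : h t - h 0 ≤ α * t * ‖v‖^2 := by
      have : h t - h 0 = (inner ℝ (gradient f (x + t • v) - gradient f (x + (0:ℝ) • v)) v : ℝ) := by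
        simp [hh, inner_sub_left]
      rw [this]
      calc (inner ℝ (gradient f (x + t • v) - gradient f (x + (0:ℝ) • v)) v : ℝ)
          ≤ ‖gradient f (x + t • v) - gradient f (x + (0:ℝ) • v)‖ * ‖v‖ :=
            real_inner_le_norm _ _
        _ ≤ (α * ‖(x + t • v) - (x + (0:ℝ) • v)‖) * ‖v‖ := by
            gcongr; exact hlip _ _
        _ = α * t * ‖v‖^2 := by
            rw [show (x + t • v) - (x + (0:ℝ) • v) = t • v by simp]
            rw [norm_smul, Real.norm_eq_abs, abs_of_nonneg ht.1]
            ring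
    linarith
  have hval : ∫ t in (0:ℝ)..1, (h 0 + α * t * ‖v‖^2) = h 0 + α / 2 * ‖v‖^2 := by
    have : (fun t : ℝ => h 0 + α * t * ‖v‖^2) = fun t : ℝ => h 0 + (α * ‖v‖^2) * t := by
      funext t; ring
    rw [this, intervalIntegral.integral_add (intervalIntegrable_const)
      ((intervalIntegrable_id).const_mul _), intervalIntegral.integral_const_mul, integral_id]
    norm_num; ring
  have : f (x + v) ≤ f (x + (0:ℝ) • v) + (h 0 + α / 2 * ‖v‖^2) := by
    linarith [hint, hbound]
  simpa [hh, add_assoc] using this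

lemma scalar_ineq {K a S α : ℝ} (hK : 0 < K) (ha : 0 < a) (hα : 0 < α) (hKaS : K * a ≤ S) :
    α/2 * (K * a / (α * S))^2 * a - (K * a / (α * S)) * a ≤
      -(2⁻¹ * a^2 / (α * (a + (K⁻¹ * S - a)))) := by
  have hS : 0 < S := lt_of_lt_of_le (mul_pos hK ha) hKaS
  have h5 : a + (K⁻¹ * S - a) = K⁻¹ * S := by ring
  rw [h5]
  have e1 : α/2 * (K * a / (α * S))^2 * a = K^2*a^3/(2*α*S^2) := by
    field_simp
  have e3 : 2⁻¹ * a^2 / (α * (K⁻¹ * S)) = K*a^2/(2*α*S) := by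
    field_simp
  have e4 : (K * a / (α * S)) * a = 2*(K*a^2/(2*α*S)) := by
    field_simp
  rw [e1, e3, e4]
  have key : K^2*a^3/(2*α*S^2) ≤ K*a^2/(2*α*S) := by
    rw [div_le_div_iff₀ (by positivity) (by positivity)]
    nlinarith [mul_le_mul_of_nonneg_left hKaS (by positivity : (0:ℝ) ≤ 2*α*K*a^2),
      mul_le_mul_of_nonneg_left (mul_le_mul_of_nonneg_left hKaS
        (by positivity : (0:ℝ) ≤ 2*α*K*a^2)) hS.le]
  linarith

lemma round_bound {n K : ℕ} (hK : 0 < K) {α : ℝ} (hα : 0 < α)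
    (L : Fin K → EuclideanSpace ℝ (Fin n) → ℝ)
    (hdiff : ∀ k, Differentiable ℝ (L k))
    (hlip : ∀ k w₁ w₂, ‖gradient (L k) w₁ - gradient (L k) w₂‖ ≤ α * ‖w₁ - w₂‖)
    (x : EuclideanSpace ℝ (Fin n))
    (hJ : (K : ℝ)⁻¹ • ∑ k, gradient (L k) x ≠ 0) :
    (K:ℝ)⁻¹ * ∑ k, L k (x - ((K:ℝ) * ‖(K:ℝ)⁻¹ • ∑ k, gradient (L k) x‖^2 /
        (α * ∑ k, ‖gradient (L k) x‖^2)) • ((K:ℝ)⁻¹ • ∑ k, gradient (L k) x))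
      ≤ (K:ℝ)⁻¹ * ∑ k, L k x
        - 2⁻¹ * ‖(K:ℝ)⁻¹ • ∑ k, gradient (L k) x‖^4 /
          (α * (‖(K:ℝ)⁻¹ • ∑ k, gradient (L k) x‖^2 +
            ((K:ℝ)⁻¹ * ∑ k, ‖gradient (L k) x‖^2 -
              ‖(K:ℝ)⁻¹ • ∑ k, gradient (L k) x‖^2))) := by
  have hKR : (0:ℝ) < K := Nat.cast_pos.mpr hK
  have hKne : (K:ℝ) ≠ 0 := hKR.ne'
  set g : Fin K → EuclideanSpace ℝ (Fin n) := fun k => gradient (L k) x with hg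
  set J : EuclideanSpace ℝ (Fin n) := (K:ℝ)⁻¹ • ∑ k, g k with hJdef
  set S : ℝ := ∑ k, ‖g k‖^2 with hS
  set a : ℝ := ‖J‖^2 with hadef
  have ha : 0 < a := pow_pos (norm_pos_iff.mpr hJ) 2
  have hnorm : ‖∑ k, g k‖^2 ≤ K * S := by
    calc ‖∑ k, g k‖^2 ≤ (∑ k, ‖g k‖)^2 := by
          apply pow_le_pow_left₀ (norm_nonneg _) (norm_sum_le _ _)
      _ ≤ ((Finset.univ : Finset (Fin K)).card : ℝ) * ∑ k, ‖g k‖^2 := by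
          exact_mod_cast sq_sum_le_card_mul_sum_sq (s := Finset.univ) (f := fun k => ‖g k‖)
      _ = K * S := by simp [hS]
  have ha' : a = (K:ℝ)⁻¹ * (K:ℝ)⁻¹ * ‖∑ k, g k‖^2 := by
    rw [hadef, hJdef, norm_smul]
    rw [Real.norm_eq_abs, abs_of_nonneg (by positivity)]
    ring
  have hKaS : (K:ℝ) * a ≤ S := by
    rw [ha']
    have h1 : (K:ℝ) * ((K:ℝ)⁻¹ * (K:ℝ)⁻¹ * ‖∑ k, g k‖^2) = (K:ℝ)⁻¹ * ‖∑ k, g k‖^2 := by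
      field_simp
    rw [h1]
    calc (K:ℝ)⁻¹ * ‖∑ k, g k‖^2 ≤ (K:ℝ)⁻¹ * ((K:ℝ) * S) := by
          apply mul_le_mul_of_nonneg_left hnorm (by positivity)
      _ = S := by field_simp
  have hSpos : 0 < S := lt_of_lt_of_le (mul_pos hKR ha) hKaS
  set lam : ℝ := (K:ℝ) * a / (α * S) with hlam
  have hlampos : 0 < lam := div_pos (mul_pos hKR ha) (mul_pos hα hSpos)
  set v : EuclideanSpace ℝ (Fin n) := -(lam • J) with hv
  have hstep : ∀ k, L k (x + v) ≤ L k x + (inner ℝ (g k) v : ℝ) + α/2 * ‖v‖^2 :=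
    fun k => descent_lemma hα (hdiff k) (hlip k) x v
  have hsumJ : ∑ k, g k = (K:ℝ) • J := by
    rw [hJdef, smul_inv_smul₀ hKne]
  have hinner : ∑ k, (inner ℝ (g k) v : ℝ) = (K:ℝ) * (-(lam * a)) := by
    rw [← sum_inner, hsumJ, real_inner_smul_left, hv, inner_neg_right,
      real_inner_smul_right, real_inner_self_eq_norm_sq, ← hadef]
  have hv2 : ‖v‖^2 = lam^2 * a := by
    rw [hv, norm_neg, norm_smul, Real.norm_eq_abs, abs_of_nonneg hlampos.le]
    rw [mul_pow, hadef]
  have hsum : (K:ℝ)⁻¹ * ∑ k, L k (x + v) ≤ (K:ℝ)⁻¹ * ∑ k, L k x - lam * a + α/2 * lam^2 * a := by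
    have h1 : ∑ k, L k (x + v) ≤ ∑ k, (L k x + (inner ℝ (g k) v : ℝ) + α/2 * ‖v‖^2) :=
      Finset.sum_le_sum fun k _ => hstep k
    have h2 : ∑ k, (L k x + (inner ℝ (g k) v : ℝ) + α/2 * ‖v‖^2) =
        ∑ k, L k x + (K:ℝ) * (-(lam * a)) + (K:ℝ) * (α/2 * (lam^2 * a)) := by
      rw [Finset.sum_add_distrib, Finset.sum_add_distrib, hinner, Finset.sum_const, hv2]
      simp only [nsmul_eq_mul, Finset.card_univ, Fintype.card_fin]
      try ring
    have h3 := mul_le_mul_of_nonneg_left (h1.trans_eq h2) (le_of_lt (inv_pos.mpr hKR))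
    calc (K:ℝ)⁻¹ * ∑ k, L k (x + v)
        ≤ (K:ℝ)⁻¹ * (∑ k, L k x + (K:ℝ) * (-(lam * a)) + (K:ℝ) * (α/2 * (lam^2 * a))) := h3
      _ = (K:ℝ)⁻¹ * ∑ k, L k x - lam * a + α/2 * lam^2 * a := by
          rw [mul_add, mul_add, ← mul_assoc, ← mul_assoc, inv_mul_cancel₀ hKne]
          ring
  have hineq := scalar_ineq hKR ha hα hKaS
  rw [← hlam] at hineq
  have h4 : ‖J‖^4 = a^2 := by rw [hadef]; ring
  have hxv : x - lam • J = x + v := by rw [hv, sub_eq_add_neg]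
  rw [hxv, h4]
  linarith

/-- Multi-round bound under the optimal learning rates
`λ*_{p+1} = K‖J_p‖²/(α ∑ₖ‖∇Lₖ(w_p)‖²)` (Theorem 2 of the paper). -/
theorem fed_multi_round_bound_optimal_lr {n K : ℕ} (hK : 0 < K) (α : ℝ) (hα : 0 < α)
    (P : ℕ) (L : Fin K → EuclideanSpace ℝ (Fin n) → ℝ)
    (hconv : ∀ k, ConvexOn ℝ Set.univ (L k))
    (hdiff : ∀ k, Differentiable ℝ (L k))
    (hlip : ∀ k w₁ w₂, ‖gradient (L k) w₁ - gradient (L k) w₂‖ ≤ α * ‖w₁ - w₂‖)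
    (w : ℕ → EuclideanSpace ℝ (Fin n))
    (hJ : ∀ p < P, (K : ℝ)⁻¹ • ∑ k, gradient (L k) (w p) ≠ 0)
    (hupdate : ∀ p < P,
      w (p + 1) = w p -
        ((K : ℝ) * ‖(K : ℝ)⁻¹ • ∑ k, gradient (L k) (w p)‖ ^ 2 /
            (α * ∑ k, ‖gradient (L k) (w p)‖ ^ 2)) •
          ((K : ℝ)⁻¹ • ∑ k, gradient (L k) (w p))) :
    (K : ℝ)⁻¹ * ∑ k, L k (w P) ≤
      (K : ℝ)⁻¹ * ∑ k, L k (w 0)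
        - ∑ p ∈ Finset.range P,
            2⁻¹ * ‖(K : ℝ)⁻¹ • ∑ k, gradient (L k) (w p)‖ ^ 4 /
              (α * (‖(K : ℝ)⁻¹ • ∑ k, gradient (L k) (w p)‖ ^ 2
                + ((K : ℝ)⁻¹ * ∑ k, ‖gradient (L k) (w p)‖ ^ 2
                    - ‖(K : ℝ)⁻¹ • ∑ k, gradient (L k) (w p)‖ ^ 2))) := by
  induction P with
  | zero => simp
  | succ P ih =>
    have ih' := ih (fun p hp => hJ p (hp.trans (Nat.lt_succ_self P)))
      (fun p hp => hupdate p (hp.trans (Nat.lt_succ_self P)))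
    rw [Finset.sum_range_succ]
    have hstep := round_bound hK hα L hdiff hlip (w P) (hJ P (Nat.lt_succ_self P))
    rw [← hupdate P (Nat.lt_succ_self P)] at hstep
    linarith
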